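/- arXiv:2506.20351 — 7 statements merged into one kernel-verified Lean document; each statement's English description precedes it below -/
import Mathlib

section
/- Let G be a finite abelian group of order g and A ⊆ G with |A| = k. Then r(A) + r(Aᶜ) = g² − 3gk + 3k², where Aᶜ is the complement of A in G. -/
open scoped Classical

noncomputable def rval {G : Type*} [AddCommGroup G] (A B C : Finset G) : ℕ :=
  ((A ×ˢ B).filter (fun p => p.1 + p.2 ∈ C)).card

noncomputable def rv {G : Type*} [AddCommGroup G] (A : Finset G) : ℕ := rval A A A

/-!
Write `r(X, Y, Z)` for the number of pairs `(x, y) ∈ X × Y` with `x + y ∈ Z`. In each of its three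
slots `r` is additive under splitting a set into `A` and `Aᶜ`, and when one slot is all of `G` the
count is the product of the other two cardinalities, because translations are bijections of `G`.
Replacing `A` by `Aᶜ` one slot at a time therefore gives
`r(Aᶜ) = (g - k)² - k (g - k) + k² - r(A)`.
-/

open Finset

namespace rval

variable {G : Type*} [AddCommGroup G]

lemma eq_sum_left (A B C : Finset G) :
    rval A B C = ∑ a ∈ A, #(B.filter fun b => a + b ∈ C) := by
  rw [rval, card_filter, sum_product]
  simp only [card_filter]

lemma eq_sum_mid (A B C : Finset G) :
    rval A B C = ∑ b ∈ B, #(A.filter fun a => a + b ∈ C) := by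
  rw [rval, card_filter, sum_product_right]
  simp only [card_filter]

variable [Fintype G]

lemma add_compl_left (A B C : Finset G) : rval A B C + rval Aᶜ B C = rval univ B C := by
  simp only [eq_sum_left]
  exact sum_add_sum_compl A _

lemma add_compl_mid (A B C : Finset G) : rval A B C + rval A Bᶜ C = rval A univ C := by
  simp only [eq_sum_mid]
  exact sum_add_sum_compl B _

lemma add_compl_right (A B C : Finset G) : rval A B C + rval A B Cᶜ = rval A B univ := by
  simp only [rval, mem_compl, mem_univ, filter_true]
  exact card_filter_add_card_filter_not (s := A ×ˢ B) (p := fun p => p.1 + p.2 ∈ C)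

lemma card_filter_add_left_mem (a : G) (C : Finset G) :
    #(univ.filter fun b => a + b ∈ C) = #C :=
  card_equiv (Equiv.addLeft a) (by simp)

lemma card_filter_add_right_mem (b : G) (C : Finset G) :
    #(univ.filter fun a => a + b ∈ C) = #C :=
  card_equiv (Equiv.addRight b) (by simp)

lemma univ_left (B C : Finset G) : rval univ B C = #B * #C := by
  simp [eq_sum_mid, card_filter_add_right_mem]

lemma univ_mid (A C : Finset G) : rval A univ C = #A * #C := by
  simp [eq_sum_left, card_filter_add_left_mem]

lemma univ_right (A B : Finset G) : rval A B univ = #A * #B := by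
  simp [rval]

end rval

theorem stmt1 {G : Type*} [AddCommGroup G] [Fintype G] (A : Finset G) (g k : ℕ)
    (hg : Fintype.card G = g) (hk : A.card = k) :
    (rv A : ℤ) + rv Aᶜ = (g : ℤ) ^ 2 - 3 * g * k + 3 * k ^ 2 := by
  have hcompl : (#Aᶜ : ℤ) = g - k := by
    rw [card_compl, Nat.cast_sub (card_le_univ A), hg, hk]
  have h₁ := rval.add_compl_left A Aᶜ Aᶜ
  have h₂ := rval.add_compl_mid A A Aᶜ
  have h₃ := rval.add_compl_right A A A
  rw [rval.univ_left] at h₁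
  rw [rval.univ_mid] at h₂
  rw [rval.univ_right] at h₃
  zify at h₁ h₂ h₃
  simp only [hcompl, hk] at h₁ h₂ h₃
  unfold rv
  linear_combination h₁ - h₂ + h₃
end

section
/- If A ⊆ 𝔽_{2^n} with |A| = 4 and 0 ∉ A, then r(A) ∈ {0, 6}. -/
open scoped Classical

/-!
In characteristic two, a pair `(a, b)` counted by `r(A)` spans the triple `{a, b, a + b} ⊆ A`, the
nonzero part of a two-dimensional subspace, and it contributes all six ordered pairs of distinct
elements of that triple. Two such triples sharing two points coincide, and two triples inside a
set of at most four elements share at least two points; so `A` contains at most one triple and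
`r(A)` is `0` or `6`.
-/

open Finset

section SumTriple

variable {G : Type*} [AddCommGroup G]

noncomputable def sumTriple (a b : G) : Finset G := {a, b, a + b}

lemma mem_sumTriple {a b x : G} : x ∈ sumTriple a b ↔ x = a ∨ x = b ∨ x = a + b := by
  simp [sumTriple]

lemma sumTriple_subset {A : Finset G} {a b : G} (ha : a ∈ A) (hb : b ∈ A) (hab : a + b ∈ A) :
    sumTriple a b ⊆ A := by
  intro x hx
  rcases mem_sumTriple.mp hx with rfl | rfl | rfl <;> assumption

lemma card_sumTriple (hG : ∀ x : G, x + x = 0) {a b : G} (h0 : (0 : G) ∉ sumTriple a b) :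
    #(sumTriple a b) = 3 := by
  simp only [mem_sumTriple, not_or] at h0
  obtain ⟨ha, hb, hab⟩ := h0
  have hne : a ≠ b := by rintro rfl; exact hab (hG a).symm
  rw [sumTriple, card_insert_of_notMem, card_pair] <;> grind

lemma add_mem_sumTriple (hG : ∀ x : G, x + x = 0) {a b x y : G} (hx : x ∈ sumTriple a b)
    (hy : y ∈ sumTriple a b) (hxy : x ≠ y) : x + y ∈ sumTriple a b := by
  have hcancel : ∀ u v : G, u + (u + v) = v := fun u v => by rw [← add_assoc, hG, zero_add]
  rw [mem_sumTriple] at hx hy ⊢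
  rcases hx with rfl | rfl | rfl <;> rcases hy with rfl | rfl | rfl <;>
    simp_all [add_comm, add_left_comm]

lemma sumTriple_eq_of_mem (hG : ∀ x : G, x + x = 0) {a b x y : G}
    (h0 : (0 : G) ∉ sumTriple a b) (hx : x ∈ sumTriple a b) (hy : y ∈ sumTriple a b)
    (hxy : x ≠ y) : sumTriple x y = sumTriple a b := by
  have hsub : sumTriple x y ⊆ sumTriple a b := by
    intro z hz
    rcases mem_sumTriple.mp hz with rfl | rfl | rfl
    exacts [hx, hy, add_mem_sumTriple hG hx hy hxy]
  refine eq_of_subset_of_card_le hsub ?_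
  rw [card_sumTriple hG h0, card_sumTriple hG fun h => h0 (hsub h)]

lemma sumTriple_eq_of_card_le_four (hG : ∀ x : G, x + x = 0) {A : Finset G} (hA : #A ≤ 4)
    (h0 : (0 : G) ∉ A) {a b d e : G} (hab : sumTriple a b ⊆ A) (hde : sumTriple d e ⊆ A) :
    sumTriple d e = sumTriple a b := by
  have h0ab : (0 : G) ∉ sumTriple a b := fun h => h0 (hab h)
  have h0de : (0 : G) ∉ sumTriple d e := fun h => h0 (hde h)
  have hinter : 1 < #(sumTriple a b ∩ sumTriple d e) := by
    have hsum := card_union_add_card_inter (sumTriple a b) (sumTriple d e)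
    have hunion := (card_le_card (union_subset hab hde)).trans hA
    rw [card_sumTriple hG h0ab, card_sumTriple hG h0de] at hsum
    omega
  obtain ⟨x, hx, y, hy, hxy⟩ := one_lt_card.mp hinter
  rw [mem_inter] at hx hy
  rw [← sumTriple_eq_of_mem hG h0de hx.2 hy.2 hxy, sumTriple_eq_of_mem hG h0ab hx.1 hy.1 hxy]

lemma filter_add_mem_eq_offDiag (hG : ∀ x : G, x + x = 0) {A : Finset G} (hA : #A ≤ 4)
    (h0 : (0 : G) ∉ A) {a b : G} (ha : a ∈ A) (hb : b ∈ A) (hab : a + b ∈ A) :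
    (A ×ˢ A).filter (fun p => p.1 + p.2 ∈ A) = (sumTriple a b).offDiag := by
  have hS := sumTriple_subset ha hb hab
  ext ⟨d, e⟩
  simp only [mem_filter, mem_product, mem_offDiag]
  constructor
  · rintro ⟨⟨hd, he⟩, hde⟩
    rw [← sumTriple_eq_of_card_le_four hG hA h0 hS (sumTriple_subset hd he hde)]
    refine ⟨mem_sumTriple.mpr (Or.inl rfl), mem_sumTriple.mpr (Or.inr (Or.inl rfl)), ?_⟩
    rintro rfl
    exact h0 (hG d ▸ hde)
  · rintro ⟨hd, he, hne⟩
    exact ⟨⟨hS hd, hS he⟩, hS (add_mem_sumTriple hG hd he hne)⟩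

lemma rv_eq_six (hG : ∀ x : G, x + x = 0) {A : Finset G} (hA : #A ≤ 4) (h0 : (0 : G) ∉ A)
    {a b : G} (ha : a ∈ A) (hb : b ∈ A) (hab : a + b ∈ A) : rv A = 6 := by
  have h0S : (0 : G) ∉ sumTriple a b := fun h => h0 (sumTriple_subset ha hb hab h)
  rw [rv, rval, filter_add_mem_eq_offDiag hG hA h0 ha hb hab, offDiag_card,
    card_sumTriple hG h0S]

lemma rv_eq_zero_or_six (hG : ∀ x : G, x + x = 0) {A : Finset G} (hA : #A ≤ 4)
    (h0 : (0 : G) ∉ A) : rv A = 0 ∨ rv A = 6 := by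
  rcases ((A ×ˢ A).filter (fun p => p.1 + p.2 ∈ A)).eq_empty_or_nonempty with h | ⟨⟨a, b⟩, hp⟩
  · exact Or.inl (by rw [rv, rval, h, card_empty])
  · simp only [mem_filter, mem_product] at hp
    exact Or.inr (rv_eq_six hG hA h0 hp.1.1 hp.1.2 hp.2)

end SumTriple

theorem stmt13_general (n : ℕ) (A : Finset (GaloisField 2 n))
    (hA : A.card = 4) (h0 : (0 : GaloisField 2 n) ∉ A) :
    rv A ∈ ({0, 6} : Set ℕ) := by
  exact rv_eq_zero_or_six CharTwo.add_self_eq_zero hA.le h0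

theorem stmt13 (n : ℕ) (hn : 0 < n) (A : Finset (GaloisField 2 n))
    (hA : A.card = 4) (h0 : (0 : GaloisField 2 n) ∉ A) :
    rv A ∈ ({0, 6} : Set ℕ) :=
  stmt13_general n A hA h0
end

section
/- For any subset A of 𝔽_{2^n} \ {0} with |A| = k, one has r(A) ≤ 6·⌊k(k−1)/6⌋; moreover r(A) = k(k−1) if and only if A ∪ {0} is an additive subgroup of 𝔽_{2^n}. -/
/-! Since `x + x = 0` and `0 ∉ A`, a pair `(a, b)` counted by `r(A)` has `a`, `b`, `a + b` distinct,
and any two distinct elements of `{a, b, a + b}` sum to the third. Hence the counted pairs fall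
into blocks of six, the ordered pairs of distinct elements of such triples. They are also among
the `k(k-1)` off-diagonal pairs of `A`, with equality exactly when `A` is closed under sums of
distinct elements, i.e. when `A ∪ {0}` is a subgroup. -/

open scoped Classical

open Finset

section ExponentTwo

variable {G : Type*} [AddCommGroup G] {A : Finset G}

noncomputable def schurPairs (A : Finset G) : Finset (G × G) :=
  (A ×ˢ A).filter (fun p => p.1 + p.2 ∈ A)

lemma rv_eq_card_schurPairs (A : Finset G) : rv A = #(schurPairs A) := rfl

noncomputable def schurTriple (p : G × G) : Finset G := {p.1, p.2, p.1 + p.2}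

lemma add_add_cancel_of_add_self (h2 : ∀ x : G, x + x = 0) (a b : G) : a + (a + b) = b := by
  rw [← add_assoc, h2, zero_add]

lemma ne_of_add_mem (h2 : ∀ x : G, x + x = 0) (h0 : (0 : G) ∉ A) {x y : G}
    (hxy : x + y ∈ A) : x ≠ y := by
  rintro rfl
  exact h0 (h2 x ▸ hxy)

lemma schurPairs_subset_offDiag (h2 : ∀ x : G, x + x = 0) (h0 : (0 : G) ∉ A) :
    schurPairs A ⊆ A.offDiag := by
  intro p hp
  simp only [schurPairs, mem_filter, mem_product] at hp
  exact mem_offDiag.mpr ⟨hp.1.1, hp.1.2, ne_of_add_mem h2 h0 hp.2⟩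

lemma rv_le_card_mul_card_sub_one (h2 : ∀ x : G, x + x = 0) (h0 : (0 : G) ∉ A) :
    rv A ≤ #A * (#A - 1) := by
  rw [Nat.mul_sub_one, ← offDiag_card]
  exact card_le_card (schurPairs_subset_offDiag h2 h0)

lemma schurTriple_subset (p : G × G) (hp : p ∈ schurPairs A) : schurTriple p ⊆ A := by
  simp only [schurPairs, mem_filter, mem_product] at hp
  simp only [schurTriple, insert_subset_iff, singleton_subset_iff]
  exact ⟨hp.1.1, hp.1.2, hp.2⟩

lemma card_schurTriple (h2 : ∀ x : G, x + x = 0) (h0 : (0 : G) ∉ A) {p : G × G}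
    (hp : p ∈ schurPairs A) : #(schurTriple p) = 3 := by
  obtain ⟨a, b⟩ := p
  have hA := schurTriple_subset (a, b) hp
  simp only [schurTriple, insert_subset_iff, singleton_subset_iff] at hA
  obtain ⟨ha, hb, hab⟩ := hA
  refine card_eq_three.mpr ⟨a, b, a + b, ne_of_add_mem h2 h0 hab, ?_, ?_, rfl⟩
  · refine fun h => h0 ?_
    rwa [← add_add_cancel_of_add_self h2 a b, ← h, h2] at hb
  · refine fun h => h0 ?_
    rwa [← add_add_cancel_of_add_self h2 b a, add_comm b a, ← h, h2] at ha

lemma add_mem_schurTriple (h2 : ∀ x : G, x + x = 0) {p : G × G} {x y : G}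
    (hx : x ∈ schurTriple p) (hy : y ∈ schurTriple p) (hxy : x ≠ y) :
    x + y ∈ schurTriple p := by
  obtain ⟨a, b⟩ := p
  simp only [schurTriple, mem_insert, mem_singleton] at hx hy ⊢
  rcases hx with rfl | rfl | rfl <;> rcases hy with rfl | rfl | rfl <;>
    first
    | exact absurd rfl hxy
    | (abel_nf; simp [two_zsmul, h2])

lemma filter_schurTriple_eq_offDiag (h2 : ∀ x : G, x + x = 0) (h0 : (0 : G) ∉ A)
    {p : G × G} (hp : p ∈ schurPairs A) :
    (schurPairs A).filter (fun q => schurTriple q = schurTriple p) = (schurTriple p).offDiag := by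
  ext ⟨x, y⟩
  simp only [mem_filter, mem_offDiag]
  constructor
  · rintro ⟨hq, hT⟩
    refine ⟨hT ▸ ?_, hT ▸ ?_, ?_⟩
    · simp [schurTriple]
    · simp [schurTriple]
    · simp only [schurPairs, mem_filter] at hq
      exact ne_of_add_mem h2 h0 hq.2
  · rintro ⟨hx, hy, hxy⟩
    have hT := schurTriple_subset p hp
    have hxyA : x + y ∈ A := hT (add_mem_schurTriple h2 hx hy hxy)
    have hq : (x, y) ∈ schurPairs A := by
      simp only [schurPairs, mem_filter, mem_product]
      exact ⟨⟨hT hx, hT hy⟩, hxyA⟩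
    refine ⟨hq, eq_of_subset_of_card_le ?_ ?_⟩
    · simp only [schurTriple, insert_subset_iff, singleton_subset_iff]
      exact ⟨hx, hy, add_mem_schurTriple h2 hx hy hxy⟩
    · rw [card_schurTriple h2 h0 hp, card_schurTriple h2 h0 hq]

lemma six_dvd_rv (h2 : ∀ x : G, x + x = 0) (h0 : (0 : G) ∉ A) : 6 ∣ rv A := by
  rw [rv_eq_card_schurPairs, card_eq_sum_card_fiberwise (fun p hp => mem_image_of_mem schurTriple hp)]
  refine dvd_sum fun T hT => ?_
  obtain ⟨p, hp, rfl⟩ := mem_image.mp hT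
  rw [filter_schurTriple_eq_offDiag h2 h0 hp, offDiag_card, card_schurTriple h2 h0 hp]

lemma rv_eq_iff_add_mem (h2 : ∀ x : G, x + x = 0) (h0 : (0 : G) ∉ A) :
    rv A = #A * (#A - 1) ↔ ∀ x ∈ A, ∀ y ∈ A, x ≠ y → x + y ∈ A := by
  have hsub := schurPairs_subset_offDiag h2 h0
  rw [rv_eq_card_schurPairs, Nat.mul_sub_one, ← offDiag_card]
  constructor
  · intro hcard x hx y hy hxy
    have hq : (x, y) ∈ schurPairs A := by
      rw [eq_of_subset_of_card_le hsub hcard.ge]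
      exact mem_offDiag.mpr ⟨hx, hy, hxy⟩
    exact (mem_filter.mp hq).2
  · intro hadd
    refine congrArg card (Subset.antisymm hsub fun q hq => ?_)
    obtain ⟨hx, hy, hxy⟩ := mem_offDiag.mp hq
    exact mem_filter.mpr ⟨mem_product.mpr ⟨hx, hy⟩, hadd _ hx _ hy hxy⟩

lemma exists_addSubgroup_coe_insert_zero_iff (h2 : ∀ x : G, x + x = 0) :
    (∃ H : AddSubgroup G, ((insert 0 A : Finset G) : Set G) = H) ↔
      ∀ x ∈ A, ∀ y ∈ A, x ≠ y → x + y ∈ A := by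
  constructor
  · rintro ⟨H, hH⟩ x hx y hy hxy
    have hmem : ∀ z, z ∈ insert 0 A ↔ z ∈ H := fun z => by
      rw [← mem_coe, hH, SetLike.mem_coe]
    have hsum := (hmem _).mpr (H.add_mem ((hmem x).mp (mem_insert_of_mem hx))
      ((hmem y).mp (mem_insert_of_mem hy)))
    refine (mem_insert.mp hsum).resolve_left fun h => hxy ?_
    rw [← add_add_cancel_of_add_self h2 x y, h, add_zero]
  · intro hadd
    refine ⟨{ carrier := ↑(insert 0 A)
              zero_mem' := mem_insert_self 0 A
              add_mem' := ?_
              neg_mem' := ?_ }, rfl⟩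
    · intro x y hx hy
      simp only [coe_insert, Set.mem_insert_iff, mem_coe] at hx hy ⊢
      rcases hx with rfl | hx
      · rwa [zero_add]
      rcases hy with rfl | hy
      · rw [add_zero]; exact Or.inr hx
      by_cases hxy : x = y
      · exact Or.inl (hxy ▸ h2 x)
      · exact Or.inr (hadd x hx y hy hxy)
    · intro x hx
      rwa [neg_eq_of_add_eq_zero_left (h2 x)]

end ExponentTwo

theorem stmt14_general (n : ℕ) (A : Finset (GaloisField 2 n)) (k : ℕ)
    (h0 : (0 : GaloisField 2 n) ∉ A) (hk : A.card = k) :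
    rv A ≤ 6 * (k * (k - 1) / 6) ∧
      (rv A = k * (k - 1) ↔
        ∃ H : AddSubgroup (GaloisField 2 n), ((insert 0 A : Finset (GaloisField 2 n)) : Set (GaloisField 2 n)) = H) := by
  have h2 : ∀ x : GaloisField 2 n, x + x = 0 := CharTwo.add_self_eq_zero
  subst hk
  refine ⟨?_, (rv_eq_iff_add_mem h2 h0).trans (exists_addSubgroup_coe_insert_zero_iff h2).symm⟩
  obtain ⟨m, hm⟩ := six_dvd_rv h2 h0
  have hle := rv_le_card_mul_card_sub_one h2 h0
  omega

theorem stmt14 (n : ℕ) (hn : 0 < n) (A : Finset (GaloisField 2 n)) (k : ℕ)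
    (h0 : (0 : GaloisField 2 n) ∉ A) (hk : A.card = k) :
    rv A ≤ 6 * (k * (k - 1) / 6) ∧
      (rv A = k * (k - 1) ↔
        ∃ H : AddSubgroup (GaloisField 2 n), ((insert 0 A : Finset (GaloisField 2 n)) : Set (GaloisField 2 n)) = H) :=
  stmt14_general n A k h0 hk
end

section
/- Let H be an index-2 additive subgroup of 𝔽_{2^n} (e.g., the image of 𝔽_{2^{n-1}}). If A ⊆ H \ {0} and B ⊆ 𝔽_{2^n} \ H, then r(A ∪ B) = r(A) + 3·r(A,B,B). -/
/-! Split `A ∪ B` into its two parts: `r(A ∪ B)` becomes the sum of the eight counts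
`r(X, Y, Z)` with `X, Y, Z ∈ {A, B}`. Since `H` has index two, `x + y ∈ H ↔ (x ∈ H ↔ y ∈ H)`,
so only `r(A, A, A)`, `r(A, B, B)`, `r(B, A, B)` and `r(B, B, A)` survive. The last two equal
`r(A, B, B)`: the first by commutativity, the second by `(b₁, b₂) ↦ (b₁ + b₂, b₂)`, which is an
involution in characteristic two. -/

open scoped Classical

namespace rval

variable {G : Type*} [AddCommGroup G]

theorem comm (A B C : Finset G) : rval A B C = rval B A C := by
  refine Finset.card_bij' (fun p _ => p.swap) (fun p _ => p.swap) ?_ ?_ (by simp) (by simp) <;>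
  · intro p hp
    simp only [Finset.mem_filter, Finset.mem_product, Prod.fst_swap, Prod.snd_swap] at hp ⊢
    exact ⟨hp.1.symm, add_comm p.2 p.1 ▸ hp.2⟩

theorem union_left {A A' : Finset G} (h : Disjoint A A') (B C : Finset G) :
    rval (A ∪ A') B C = rval A B C + rval A' B C := by
  rw [rval, Finset.union_product, Finset.filter_union, Finset.card_union_of_disjoint
    (Finset.disjoint_filter_filter (Finset.disjoint_product.mpr (Or.inl h)))]
  rfl

theorem union_mid (A : Finset G) {B B' : Finset G} (h : Disjoint B B') (C : Finset G) :
    rval A (B ∪ B') C = rval A B C + rval A B' C := by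
  rw [comm, union_left h, comm B, comm B']

theorem union_right (A B : Finset G) {C C' : Finset G} (h : Disjoint C C') :
    rval A B (C ∪ C') = rval A B C + rval A B C' := by
  simp only [rval, Finset.mem_union, Finset.filter_or]
  exact Finset.card_union_of_disjoint
    (Finset.disjoint_filter.mpr fun _ _ hC hC' => Finset.disjoint_left.mp h hC hC')

theorem eq_zero_of_forall_add_notMem {A B C : Finset G} (h : ∀ a ∈ A, ∀ b ∈ B, a + b ∉ C) :
    rval A B C = 0 := by
  simp only [rval, Finset.card_eq_zero, Finset.filter_eq_empty_iff, Finset.mem_product]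
  exact fun p hp => h _ hp.1 _ hp.2

theorem swap_left_right (h2 : ∀ x : G, x + x = 0) (A B C : Finset G) :
    rval A B C = rval C B A := by
  have hcancel : ∀ x y : G, x + y + y = x := fun x y => by rw [add_assoc, h2, add_zero]
  refine Finset.card_bij' (fun p _ => (p.1 + p.2, p.2)) (fun p _ => (p.1 + p.2, p.2)) ?_ ?_
    (fun p _ => by simp [hcancel]) (fun p _ => by simp [hcancel]) <;>
  · intro p hp
    simp only [Finset.mem_filter, Finset.mem_product, hcancel] at hp ⊢
    exact ⟨⟨hp.2, hp.1.2⟩, hp.1.1⟩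

end rval

open rval in
theorem rv_union_of_index_two {G : Type*} [AddCommGroup G] (h2 : ∀ x : G, x + x = 0) {H : AddSubgroup G} (hH : H.index = 2)
    {A B : Finset G} (hA : ∀ a ∈ A, a ∈ H) (hB : ∀ b ∈ B, b ∉ H) :
    rv (A ∪ B) = rv A + 3 * rval A B B := by
  have hAB : Disjoint A B := Finset.disjoint_left.mpr fun a ha hb => hB a hb (hA a ha)
  have hsum : ∀ x y : G, x + y ∈ H ↔ (x ∈ H ↔ y ∈ H) :=
    fun _ _ => AddSubgroup.add_mem_iff_of_index_two hH
  have hAAB : rval A A B = 0 := eq_zero_of_forall_add_notMem fun a ha a' ha' hB' =>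
    hB _ hB' ((hsum a a').mpr (iff_of_true (hA a ha) (hA a' ha')))
  have hABA : rval A B A = 0 := eq_zero_of_forall_add_notMem fun a ha b hb hA' =>
    hB b hb (((hsum a b).mp (hA _ hA')).mp (hA a ha))
  have hBBB : rval B B B = 0 := eq_zero_of_forall_add_notMem fun b hb b' hb' hB' =>
    hB _ hB' ((hsum b b').mpr (iff_of_false (hB b hb) (hB b' hb')))
  rw [rv, union_left hAB, union_mid _ hAB, union_mid _ hAB, union_right _ _ hAB,
    union_right _ _ hAB, union_right _ _ hAB, union_right _ _ hAB, hAAB, hABA, hBBB,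
    comm B A A, hABA, comm B A B, swap_left_right h2 B B A, rv]
  ring

theorem stmt15_general (n : ℕ) (H : AddSubgroup (GaloisField 2 n))
    (hH : H.index = 2) (A B : Finset (GaloisField 2 n))
    (hA : ∀ a ∈ A, a ∈ H ∧ a ≠ 0) (hB : ∀ b ∈ B, b ∉ H) :
    rv (A ∪ B) = rv A + 3 * rval A B B :=
  rv_union_of_index_two CharTwo.add_self_eq_zero hH (fun a ha => (hA a ha).1) hB

theorem stmt15 (n : ℕ) (hn : 0 < n) (H : AddSubgroup (GaloisField 2 n))
    (hH : H.index = 2) (A B : Finset (GaloisField 2 n))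
    (hA : ∀ a ∈ A, a ∈ H ∧ a ≠ 0) (hB : ∀ b ∈ B, b ∉ H) :
    rv (A ∪ B) = rv A + 3 * rval A B B :=
  stmt15_general n H hH A B hA hB
end

section
/- Let S ⊆ 𝔽_{2^n} \ {0} with |S| = k and let S̄* be the complement of S in 𝔽_{2^n} \ {0}. Then r(S̄*) = 2^{2n} − 3(2^n − k − 1)(k + 1) − (3k + 1) − r(S). -/
/-!
Put `U = insert 0 S`, so that the set in question is `Uᶜ`. For fixed `B` and `C`, exactly
`|B| |C|` pairs `(a, b) ∈ G × B` have `a + b ∈ C`, since `(a, b) ↦ (b, a + b)` is a bijection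
onto `B × C`. Removing one complemented coordinate at a time therefore gives
`r(Uᶜ) + r(U) = |Uᶜ|² - |U| |Uᶜ| + |U|²`. Adjoining `0` to `S` adds the triples with a zero
coordinate: `|U|` with `a = 0`, `|S|` with `b = 0`, and `|S|` with `a + b = 0` (in characteristic
two `a + b = 0` means `a = b`), so `r(U) = r(S) + 3k + 1`.
-/

open scoped Classical

open Finset

namespace rval

variable {G : Type*} [AddCommGroup G]

theorem eq_sum (A B C : Finset G) :
    rval A B C = ∑ a ∈ A, ∑ b ∈ B, if a + b ∈ C then 1 else 0 := by
  rw [rval, card_filter, sum_product]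

theorem insert_zero_left {A : Finset G} (h : 0 ∉ A) (B C : Finset G) :
    rval (insert 0 A) B C = rval A B C + #(B ∩ C) := by
  simp [eq_sum, sum_insert h, add_comm, filter_mem_eq_inter]

theorem insert_zero_mid {B : Finset G} (h : 0 ∉ B) (A C : Finset G) :
    rval A (insert 0 B) C = rval A B C + #(A ∩ C) := by
  simp [eq_sum, sum_insert h, sum_add_distrib, add_comm]

theorem insert_zero_right {C : Finset G} (h : 0 ∉ C) (A B : Finset G) :
    rval A B (insert 0 C) = rval A B C + #(A.filter (-· ∈ B)) := by
  have split (a b : G) : (if a + b ∈ insert 0 C then 1 else 0) =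
      (if a + b ∈ C then 1 else 0) + if -a = b then 1 else 0 := by
    by_cases hab : a + b = 0
    · simp [hab, neg_eq_of_add_eq_zero_right hab, h]
    · have hb : -a ≠ b := by
        rintro rfl
        exact hab (add_neg_cancel a)
      simp [hab, hb]
  simp only [eq_sum, split, sum_add_distrib, sum_ite_eq, sum_boole, Nat.cast_id]

theorem eq_card_filter_sub_left (A B C : Finset G) :
    rval A B C = #((B ×ˢ C).filter fun q => q.2 - q.1 ∈ A) := by
  refine card_nbij' (fun p => (p.2, p.1 + p.2)) (fun q => (q.2 - q.1, q.1)) ?_ ?_ ?_ ?_ <;>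
    intro p <;> simp +contextual

theorem eq_card_filter_sub_mid (A B C : Finset G) :
    rval A B C = #((A ×ˢ C).filter fun q => q.2 - q.1 ∈ B) := by
  refine card_nbij' (fun p => (p.1, p.1 + p.2)) (fun q => (q.1, q.2 - q.1)) ?_ ?_ ?_ ?_ <;>
    intro p <;> simp +contextual

variable [Fintype G]

theorem compl_left_add (A B C : Finset G) : rval Aᶜ B C + rval A B C = #B * #C := by
  rw [eq_card_filter_sub_left, eq_card_filter_sub_left, add_comm, ← card_product]
  simpa only [mem_compl] using card_filter_add_card_filter_not _

theorem compl_mid_add (A B C : Finset G) : rval A Bᶜ C + rval A B C = #A * #C := by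
  rw [eq_card_filter_sub_mid, eq_card_filter_sub_mid, add_comm, ← card_product]
  simpa only [mem_compl] using card_filter_add_card_filter_not _

theorem compl_right_add (A B C : Finset G) : rval A B Cᶜ + rval A B C = #A * #B := by
  rw [rval, rval, add_comm, ← card_product]
  simpa only [mem_compl] using card_filter_add_card_filter_not _

end rval

theorem rv_compl_add_rv {G : Type*} [AddCommGroup G] [Fintype G] (A : Finset G) :
    (rv Aᶜ + rv A : ℤ) = #Aᶜ ^ 2 - #A * #Aᶜ + #A ^ 2 := by
  have h₁ := rval.compl_left_add A Aᶜ Aᶜ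
  have h₂ := rval.compl_mid_add A A Aᶜ
  have h₃ := rval.compl_right_add A A A
  unfold rv
  zify at h₁ h₂ h₃
  linear_combination h₁ - h₂ + h₃

theorem rv_insert_zero {G : Type*} [AddCommGroup G] {S : Finset G} (h : 0 ∉ S) :
    rv (insert 0 S) = rv S + 2 * #S + 1 + #(S.filter (-· ∈ S)) := by
  rw [rv, rv, rval.insert_zero_left h, rval.insert_zero_mid h, rval.insert_zero_right h,
    inter_self, inter_eq_left.2 (subset_insert 0 S), card_insert_of_notMem h]
  ring

theorem rv_insert_zero_of_charTwo {R : Type*} [Ring R] [CharP R 2] {S : Finset R} (h : 0 ∉ S) :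
    rv (insert 0 S) = rv S + 3 * #S + 1 := by
  rw [rv_insert_zero h, filter_true_of_mem fun a ha => (CharTwo.neg_eq a).symm ▸ ha]
  ring

theorem stmt17 (n : ℕ) (hn : 0 < n) (S : Finset (GaloisField 2 n)) (k : ℕ)
    (h0 : (0 : GaloisField 2 n) ∉ S) (hk : S.card = k)
    (T : Finset (GaloisField 2 n))
    (hT : ∀ x : GaloisField 2 n, x ∈ T ↔ x ≠ 0 ∧ x ∉ S) :
    (rv T : ℤ) = 2 ^ (2 * n) - 3 * ((2 : ℤ) ^ n - k - 1) * (k + 1) - (3 * k + 1) - rv S := by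
  have := Fintype.ofFinite (GaloisField 2 n)
  obtain rfl : T = (insert 0 S)ᶜ := by
    ext x
    simp [hT]
  have hcard : #(insert 0 S)ᶜ + (k + 1) = 2 ^ n := by
    rw [← hk, ← card_insert_of_notMem h0, card_compl_add_card, ← Nat.card_eq_fintype_card,
      GaloisField.card 2 n hn.ne']
  have hcompl : (#(insert 0 S)ᶜ : ℤ) = 2 ^ n - k - 1 := by
    zify at hcard
    linarith
  have key := rv_compl_add_rv (insert 0 S)
  rw [rv_insert_zero_of_charTwo h0, card_insert_of_notMem h0, hk, hcompl] at key
  push_cast at key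
  rw [pow_mul']
  linear_combination key
end

section
/- Let H be an index-2 additive subgroup of 𝔽_{2^n}, A = {a₁,…,a_k} ⊆ H \ {0}, and fix v ∉ H. Let B = {a_i + v : 1 ≤ i ≤ k}. Then r(A ∪ B) = 4·r(A). -/
/-!
Since `v + v = 0` and `H` has index two, the map fixing `H` and sending `x ∉ H` to `x + v` is an
additive retraction `π` onto `H` whose fibre over `a ∈ H` is `{a, a + v}`. Now `A ∪ B = π⁻¹(A)`,
so every pair `(a, b) ∈ A × A` with `a + b ∈ A` lifts to exactly `2 · 2` pairs of `A ∪ B` whose sum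
lies in `A ∪ B`.
-/

open scoped Classical

open Finset

theorem rv_eq_sq_mul_of_card_fiber {G K : Type*} [AddCommGroup G] [AddCommGroup K]
    (f : G →+ K) {S : Finset G} {A : Finset K} {m : ℕ}
    (hS : ∀ x, x ∈ S ↔ f x ∈ A) (hfib : ∀ a ∈ A, #{x ∈ S | f x = a} = m) :
    rv S = m ^ 2 * rv A := by
  have hmaps : Set.MapsTo (Prod.map f f) ({p ∈ S ×ˢ S | p.1 + p.2 ∈ S} : Finset _)
      ({p ∈ A ×ˢ A | p.1 + p.2 ∈ A} : Finset _) := by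
    rintro ⟨x, y⟩ hxy
    simp_all
  have hfiber : ∀ p ∈ ({p ∈ A ×ˢ A | p.1 + p.2 ∈ A} : Finset _),
      #{q ∈ {q ∈ S ×ˢ S | q.1 + q.2 ∈ S} | Prod.map f f q = p} = m * m := by
    rintro ⟨a, b⟩ hab
    simp only [mem_filter, mem_product] at hab
    have hprod : {q ∈ {q ∈ S ×ˢ S | q.1 + q.2 ∈ S} | Prod.map f f q = (a, b)} =
        {x ∈ S | f x = a} ×ˢ {y ∈ S | f y = b} := by
      ext ⟨x, y⟩
      simp only [mem_filter, mem_product, hS, map_add, Prod.map, Prod.mk.injEq]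
      constructor
      · rintro ⟨⟨⟨hx, hy⟩, -⟩, rfl, rfl⟩
        exact ⟨⟨hx, rfl⟩, hy, rfl⟩
      · rintro ⟨⟨hx, rfl⟩, hy, rfl⟩
        exact ⟨⟨⟨hx, hy⟩, hab.2⟩, rfl, rfl⟩
    rw [hprod, card_product, hfib a hab.1.1, hfib b hab.1.2]
  unfold rv rval
  rw [card_eq_sum_card_fiberwise hmaps, sum_congr rfl hfiber, sum_const, smul_eq_mul]
  ring

namespace AddSubgroup

variable {G : Type*} [AddCommGroup G] {H : AddSubgroup G} {v : G}

noncomputable def indexTwoRetraction (hH : H.index = 2) (hv2 : v + v = 0) : G →+ G where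
  toFun x := if x ∈ H then x else x + v
  map_zero' := by simp
  map_add' x y := by
    have hxy := H.add_mem_iff_of_index_two hH (a := x) (b := y)
    by_cases hx : x ∈ H <;> by_cases hy : y ∈ H <;> simp only [hx, hy] at hxy
    · simp [hx, hy, hxy]
    · simp [hx, hy, hxy, add_assoc]
    · simp [hx, hy, hxy, add_right_comm]
    · simp only [hx, hy, hxy, if_true, if_false]
      rw [add_add_add_comm, hv2, add_zero]

variable (hH : H.index = 2) (hv2 : v + v = 0)

@[simp]
theorem indexTwoRetraction_apply_of_mem {x : G} (hx : x ∈ H) :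
    indexTwoRetraction hH hv2 x = x := if_pos hx

@[simp]
theorem indexTwoRetraction_apply_of_notMem {x : G} (hx : x ∉ H) :
    indexTwoRetraction hH hv2 x = x + v := if_neg hx

theorem indexTwoRetraction_eq_iff (hv : v ∉ H) {a x : G} (ha : a ∈ H) :
    indexTwoRetraction hH hv2 x = a ↔ x = a ∨ x = a + v := by
  have hav : a + v ∉ H := fun h => hv ((H.add_mem_cancel_left ha).1 h)
  by_cases hx : x ∈ H
  · rw [indexTwoRetraction_apply_of_mem hH hv2 hx]
    exact ⟨Or.inl, fun h => h.resolve_right (by rintro rfl; exact hav hx)⟩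
  · rw [indexTwoRetraction_apply_of_notMem hH hv2 hx]
    constructor
    · rintro rfl; right; rw [add_assoc, hv2, add_zero]
    · rintro (rfl | rfl)
      · exact absurd ha hx
      · rw [add_assoc, hv2, add_zero]

theorem mem_union_image_add_iff (hv : v ∉ H) {A : Finset G} (hA : ∀ a ∈ A, a ∈ H) (x : G) :
    x ∈ A ∪ A.image (· + v) ↔ indexTwoRetraction hH hv2 x ∈ A := by
  have hadd : ∀ y, y + v + v = y := fun y => by rw [add_assoc, hv2, add_zero]
  by_cases hx : x ∈ H
  · rw [indexTwoRetraction_apply_of_mem hH hv2 hx, mem_union, mem_image, or_iff_left_iff_imp]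
    rintro ⟨a, ha, rfl⟩
    exact absurd ((H.add_mem_cancel_left (hA a ha)).1 hx) hv
  · rw [indexTwoRetraction_apply_of_notMem hH hv2 hx, mem_union, mem_image]
    exact ⟨fun h => h.elim (fun hxA => absurd (hA x hxA) hx) (by rintro ⟨a, ha, rfl⟩; rwa [hadd]),
      fun h => Or.inr ⟨x + v, h, hadd x⟩⟩

theorem card_filter_indexTwoRetraction_eq (hv : v ∉ H) {S A : Finset G}
    (hS : ∀ x, x ∈ S ↔ indexTwoRetraction hH hv2 x ∈ A) {a : G} (ha : a ∈ H) (haA : a ∈ A) :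
    #{x ∈ S | indexTwoRetraction hH hv2 x = a} = 2 := by
  have hfiber : {x ∈ S | indexTwoRetraction hH hv2 x = a} = {a, a + v} := by
    ext x
    rw [mem_filter, hS, mem_insert, mem_singleton, ← indexTwoRetraction_eq_iff hH hv2 hv ha]
    exact ⟨And.right, fun h => ⟨h ▸ haA, h⟩⟩
  have hv0 : v ≠ 0 := fun h => hv (h ▸ H.zero_mem)
  rw [hfiber, card_pair (by simpa using hv0)]

end AddSubgroup

theorem stmt18_general (n : ℕ) (H : AddSubgroup (GaloisField 2 n))
    (hH : H.index = 2) (A : Finset (GaloisField 2 n))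
    (hA : ∀ a ∈ A, a ∈ H ∧ a ≠ 0) (v : GaloisField 2 n) (hv : v ∉ H)
    (B : Finset (GaloisField 2 n)) (hB : B = A.image (fun a => a + v)) :
    rv (A ∪ B) = 4 * rv A := by
  subst hB
  have hv2 : v + v = 0 := CharTwo.add_self_eq_zero v
  have hAH : ∀ a ∈ A, a ∈ H := fun a ha => (hA a ha).1
  have hpre := AddSubgroup.mem_union_image_add_iff hH hv2 hv hAH
  exact rv_eq_sq_mul_of_card_fiber _ hpre fun a ha =>
    AddSubgroup.card_filter_indexTwoRetraction_eq hH hv2 hv hpre (hAH a ha) ha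

theorem stmt18 (n : ℕ) (hn : 0 < n) (H : AddSubgroup (GaloisField 2 n))
    (hH : H.index = 2) (A : Finset (GaloisField 2 n))
    (hA : ∀ a ∈ A, a ∈ H ∧ a ≠ 0) (v : GaloisField 2 n) (hv : v ∉ H)
    (B : Finset (GaloisField 2 n)) (hB : B = A.image (fun a => a + v)) :
    rv (A ∪ B) = 4 * rv A :=
  stmt18_general n H hH A hA v hv B hB
end

section
/- Let H be an index-2 additive subgroup of 𝔽_{2^n}, A = {a₁,…,a_k} ⊆ H \ {0}, and fix b ∉ H. Let B = {b} ∪ {b + a_i : 1 ≤ i ≤ k}. Then r(A ∪ B) = 4·r(A) + 6k. -/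
open scoped Classical

/-! Split `A ∪ B` along the cosets of `H`: `A ⊆ H` and `B ⊆ b + H`, and in characteristic 2 also
`B + B ⊆ H`, so besides `r(A)` only the three counts with exactly one summand from `A` survive.
Translating by `b` turns each of them into a count over `A ∪ {0}`, and each equals `r(A) + 2|A|`. -/

open Finset
open scoped Pointwise

section Rval

variable {G : Type*} [AddCommGroup G]

lemma rval_eq_sum_card (X Y Z : Finset G) : rval X Y Z = ∑ x ∈ X, #{y ∈ Y | x + y ∈ Z} := by
  simp only [rval, card_filter, sum_product]

lemma rval_comm (X Y Z : Finset G) : rval X Y Z = rval Y X Z := by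
  simp only [rval, card_filter, sum_product]
  rw [sum_comm]
  simp only [add_comm]

lemma rval_congr {X Y Z Z' : Finset G} (h : ∀ x ∈ X, ∀ y ∈ Y, x + y ∈ Z ↔ x + y ∈ Z') :
    rval X Y Z = rval X Y Z' := by
  rw [rval, rval, filter_congr fun p hp => h p.1 (mem_product.1 hp).1 p.2 (mem_product.1 hp).2]

lemma rval_union_left {X X' : Finset G} (h : Disjoint X X') (Y Z : Finset G) :
    rval (X ∪ X') Y Z = rval X Y Z + rval X' Y Z := by
  simp only [rval_eq_sum_card, sum_union h]

lemma rval_union_right (X : Finset G) {Y Y' : Finset G} (h : Disjoint Y Y') (Z : Finset G) :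
    rval X (Y ∪ Y') Z = rval X Y Z + rval X Y' Z := by
  simp only [rval_comm X, rval_union_left h]

lemma rval_insert_left {x : G} {X : Finset G} (hx : x ∉ X) (Y Z : Finset G) :
    rval (insert x X) Y Z = #{y ∈ Y | x + y ∈ Z} + rval X Y Z := by
  simp only [rval_eq_sum_card, sum_insert hx]

lemma rval_insert_right (X : Finset G) {y : G} {Y : Finset G} (hy : y ∉ Y) (Z : Finset G) :
    rval X (insert y Y) Z = #{x ∈ X | x + y ∈ Z} + rval X Y Z := by
  simp only [rval_comm X, rval_insert_left hy, add_comm y]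

lemma rval_insert_out (X Y : Finset G) {z : G} {Z : Finset G} (hz : z ∉ Z) :
    rval X Y (insert z Z) = #{p ∈ X ×ˢ Y | p.1 + p.2 = z} + rval X Y Z := by
  rw [rval, rval, filter_congr fun p _ => mem_insert, filter_or, card_union_of_disjoint]
  exact disjoint_filter.2 fun p _ hp => hp ▸ hz

lemma rval_vadd (b c : G) (X Y Z : Finset G) :
    rval (b +ᵥ X) (c +ᵥ Y) ((b + c) +ᵥ Z) = rval X Y Z := by
  refine card_nbij' (fun p => (-b + p.1, -c + p.2)) (fun p => (b + p.1, c + p.2)) ?_ ?_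
    (fun _ _ => by simp) (fun _ _ => by simp)
  · rintro ⟨x, y⟩
    simp only [coe_filter, mem_product, Set.mem_ofPred_eq, ← neg_vadd_mem_iff, vadd_eq_add]
    rintro ⟨hxy, hz⟩
    exact ⟨hxy, by rwa [show -b + x + (-c + y) = -(b + c) + (x + y) by abel]⟩
  · rintro ⟨x, y⟩
    simp only [coe_filter, mem_product, Set.mem_ofPred_eq, ← neg_vadd_mem_iff, vadd_eq_add,
      neg_add_cancel_left]
    rintro ⟨hxy, hz⟩
    exact ⟨hxy, by rwa [show -(b + c) + (b + x + (c + y)) = x + y by abel]⟩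

lemma rv_union_of_mem_subgroup (H : AddSubgroup G) {A B : Finset G} (hA : ∀ a ∈ A, a ∈ H)
    (hB : ∀ y ∈ B, y ∉ H) (hBB : ∀ y ∈ B, ∀ y' ∈ B, y + y' ∈ H) :
    rv (A ∪ B) = rv A + rval A B B + rval B A B + rval B B A := by
  have hAB : Disjoint A B := disjoint_left.2 fun a ha ha' => hB a ha' (hA a ha)
  have mem_of_mem : ∀ z ∈ H, z ∈ A ∪ B ↔ z ∈ A := fun z hz => by
    simpa using fun h => absurd hz (hB z h)
  have mem_of_notMem : ∀ z ∉ H, z ∈ A ∪ B ↔ z ∈ B := fun z hz => by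
    simpa using fun h => absurd (hA z h) hz
  rw [rv, rval_union_left hAB, rval_union_right _ hAB, rval_union_right _ hAB,
    rval_congr fun x hx y hy => mem_of_mem _ (H.add_mem (hA x hx) (hA y hy)),
    rval_congr fun x hx y hy => mem_of_notMem (x + y) fun h => hB y hy <| by
      simpa using H.sub_mem h (hA x hx),
    rval_congr fun x hx y hy => mem_of_notMem (x + y) fun h => hB x hx <| by
      simpa using H.sub_mem h (hA y hy),
    rval_congr fun x hx y hy => mem_of_mem _ (hBB x hx y hy), rv]
  ring

lemma rval_insert_zero_insert_zero_self {A : Finset G} (h0 : (0 : G) ∉ A) :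
    rval (insert 0 A) (insert 0 A) A = rv A + 2 * #A := by
  rw [rval_insert_left h0, rval_insert_right _ h0]
  simp only [zero_add, add_zero, subset_insert, filter_mem_eq_of_subset,
    filter_true_of_mem fun _ => id, rv]
  ring

end Rval

section CharTwo

variable {G : Type*} [AddCommGroup G]
variable (h2 : ∀ x : G, x + x = 0)
include h2

lemma card_filter_add_eq_zero (X : Finset G) : #{p ∈ X ×ˢ X | p.1 + p.2 = 0} = #X := by
  rw [← diag_card X, diag_eq_filter]
  congr 1
  refine filter_congr fun p _ => ⟨fun h => ?_, fun h => h ▸ h2 p.1⟩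
  exact (add_eq_zero_iff_eq_neg.1 h).trans (neg_eq_of_add_eq_zero_right (h2 p.2))

lemma rval_self_insert_zero_insert_zero {A : Finset G} (h0 : (0 : G) ∉ A) :
    rval A (insert 0 A) (insert 0 A) = rv A + 2 * #A := by
  rw [rval_insert_right _ h0, rval_insert_out _ _ h0, card_filter_add_eq_zero h2,
    filter_true_of_mem fun x hx => (add_zero x).symm ▸ mem_insert_of_mem hx, rv]
  ring

theorem rv_union_vadd_insert_zero (H : AddSubgroup G) {A : Finset G}
    (hA : ∀ a ∈ A, a ∈ H ∧ a ≠ 0) {b : G} (hb : b ∉ H) :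
    rv (A ∪ (b +ᵥ insert 0 A)) = 4 * rv A + 6 * #A := by
  have h0 : (0 : G) ∉ A := fun h => (hA 0 h).2 rfl
  have hA₀ : ∀ c ∈ insert 0 A, c ∈ H := by
    simpa [H.zero_mem] using fun a ha => (hA a ha).1
  have hB : ∀ y ∈ b +ᵥ insert 0 A, y ∉ H := by
    simp only [mem_vadd_finset, vadd_eq_add]
    rintro _ ⟨c, hc, rfl⟩ h
    exact hb (by simpa using H.sub_mem h (hA₀ c hc))
  have hBB : ∀ y ∈ b +ᵥ insert 0 A, ∀ y' ∈ b +ᵥ insert 0 A, y + y' ∈ H := by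
    simp only [mem_vadd_finset, vadd_eq_add]
    rintro _ ⟨c, hc, rfl⟩ _ ⟨c', hc', rfl⟩
    rw [add_add_add_comm, h2, zero_add]
    exact H.add_mem (hA₀ c hc) (hA₀ c' hc')
  have shiftAB := rval_vadd 0 b A (insert 0 A) (insert 0 A)
  have shiftBA := rval_vadd b 0 (insert 0 A) A (insert 0 A)
  have shiftBB := rval_vadd b b (insert 0 A) (insert 0 A) A
  simp only [zero_vadd, zero_add, add_zero, h2] at shiftAB shiftBA shiftBB
  rw [rv_union_of_mem_subgroup H (fun a ha => (hA a ha).1) hB hBB, shiftAB, shiftBA, shiftBB,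
    rval_comm _ A, rval_self_insert_zero_insert_zero h2 h0, rval_insert_zero_insert_zero_self h0]
  ring

end CharTwo

theorem stmt19_general (n : ℕ) (H : AddSubgroup (GaloisField 2 n))
    (A : Finset (GaloisField 2 n)) (k : ℕ)
    (hA : ∀ a ∈ A, a ∈ H ∧ a ≠ 0) (hk : A.card = k)
    (b : GaloisField 2 n) (hb : b ∉ H)
    (B : Finset (GaloisField 2 n)) (hB : B = insert b (A.image (fun a => b + a))) :
    rv (A ∪ B) = 4 * rv A + 6 * k := by
  have hB' : B = b +ᵥ insert 0 A := by
    rw [hB, vadd_finset_insert, vadd_eq_add, add_zero, vadd_finset_def]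
    rfl
  rw [hB', ← hk]
  exact rv_union_vadd_insert_zero CharTwo.add_self_eq_zero H hA hb

theorem stmt19 (n : ℕ) (hn : 0 < n) (H : AddSubgroup (GaloisField 2 n))
    (hH : H.index = 2) (A : Finset (GaloisField 2 n)) (k : ℕ)
    (hA : ∀ a ∈ A, a ∈ H ∧ a ≠ 0) (hk : A.card = k)
    (b : GaloisField 2 n) (hb : b ∉ H)
    (B : Finset (GaloisField 2 n)) (hB : B = insert b (A.image (fun a => b + a))) :
    rv (A ∪ B) = 4 * rv A + 6 * k :=
  stmt19_general n H A k hA hk b hb B hB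
end
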